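/- arXiv:2407.19166 — 4 statements merged into one kernel-verified Lean document; each statement's English description precedes it below -/
import Mathlib

section
/- A projected pixel lies within distance λ of the target pixel (inlier condition) if and only if the camera scale s satisfies J(P̄, r d, p^st) ≤ s ≤ J(P̄, r d, p^ed), where p^st and p^ed are the two intersection points of the epipolar line with the circle of radius λ centered at the target pixel. -/
/-- inlier condition is an interval of camera scales.
The projected pixel `q s = a + g s • v` moves monotonically along the epipolar
line (direction `v`, starting point `q^r = a` at `s = 0`); the line meets the
circle of radius `lam` about the target `c` in the parameter interval
`[ust, ued]`, and `sst, sed` are the scales mapped to those endpoints. -/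
theorem stmt_6 (a v c : EuclideanSpace ℝ (Fin 2)) (lam : ℝ) (hlam : 0 < lam)
    (g : ℝ → ℝ) (hg : StrictMono g) (hg0 : g 0 = 0)
    (ust ued sst sed : ℝ)
    (hint : {u : ℝ | ‖a + u • v - c‖ ≤ lam} = Set.Icc ust ued)
    (hst : g sst = ust) (hed : g sed = ued)
    (hout : lam < ‖a - c‖) :
    ∀ s : ℝ, ‖a + g s • v - c‖ ≤ lam ↔ sst ≤ s ∧ s ≤ sed := by
  intro s
  have h : ‖a + g s • v - c‖ ≤ lam ↔ g s ∈ Set.Icc ust ued := by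
    rw [← hint]; simp
  rw [h, Set.mem_Icc, ← hst, ← hed, hg.le_iff_le, hg.le_iff_le]
end

section
/- The epipolar lines generated by varying the two camera scales s_i, s_j ∈ (0, ∞) form a one-parameter family bounded by the two limiting lines corresponding to translation directions -R_j R_i^{-1} t̄_i and t̄_j; moreover all such lines pass through the common point q^r (the pure-rotation projection of p_i). -/
open Matrix

/-- every epipolar line in the one-parameter family generated by
the two camera scales passes through the common pure-rotation projection
point `K R K⁻¹ p_i` (in homogeneous coordinates, the incidence relation
`l ⬝ᵥ q^r = 0` holds for all positive scales). -/
theorem stmt_10 (Ri Rj K : Matrix (Fin 3) (Fin 3) ℝ) (hK : IsUnit K.det)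
    (hRi : Ri.transpose * Ri = 1) (hRj : Rj.transpose * Rj = 1)
    (hRidet : Ri.det = 1) (hRjdet : Rj.det = 1)
    (ti tj pi : Fin 3 → ℝ) (hti : ti ⬝ᵥ ti = 1) (htj : tj ⬝ᵥ tj = 1) :
    ∀ si sj : ℝ, 0 < si → 0 < sj →
      let R := Rj * Ri⁻¹
      let tij : Fin 3 → ℝ := -si • R.mulVec ti + sj • tj
      let tbar : Fin 3 → ℝ := (Real.sqrt (tij ⬝ᵥ tij))⁻¹ • tij
      let l : Fin 3 → ℝ :=
        (K⁻¹).transpose.mulVec (crossProduct tbar (R.mulVec ((K⁻¹).mulVec pi)))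
      l ⬝ᵥ (K * R * K⁻¹).mulVec pi = 0 := by
  intro si sj hsi hsj R tij tbar l
  have h1 : l ⬝ᵥ (K * R * K⁻¹).mulVec pi
      = (crossProduct tbar (R.mulVec ((K⁻¹).mulVec pi))) ⬝ᵥ
        (K⁻¹ * (K * R * K⁻¹)).mulVec pi := by
    simp [l, Matrix.mulVec_transpose, ← Matrix.dotProduct_mulVec,
      Matrix.mulVec_mulVec]
  rw [h1]
  have h2 : K⁻¹ * (K * R * K⁻¹) = R * K⁻¹ := by
    simp [← mul_assoc, Matrix.nonsing_inv_mul K hK]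
  rw [h2]
  simp only [← Matrix.mulVec_mulVec]
  rw [dotProduct_comm]
  exact dot_cross_self _ _
end

section
/- After the first epoch, each epoch of Bundle-RANSAC-Adjustment updates at most one pose, so at most 2(N-2)(K-1) new unique Hough matrices are required per epoch. -/
/-- after the first epoch, updating the pose of a single support
frame `i` requires at most `2(N-2)(K-1)` new unique Hough matrices: ordered
pairs of frame `i` (with each of its `K - 1` non-optimal candidates) against
the other `N - 2` support frames, in both orders. -/
theorem stmt_13 (N K : ℕ) [NeZero N] [NeZero K] (hN : 2 ≤ N)
    (g : Fin N → Option (Fin K)) (i : Fin N) (kstar : Fin K)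
    (hi : i ≠ 0) (hgi : g i = some kstar) :
    Set.ncard {m : Fin N × Fin N × Option (Fin K) × Option (Fin K) |
      ∃ j : Fin N, j ≠ i ∧ j ≠ 0 ∧ ∃ k : Fin K, k ≠ kstar ∧
        (m = (i, j, some k, g j) ∨ m = (j, i, g j, some k))} =
      2 * (N - 2) * (K - 1) := by
  classical
  set f : Bool × Fin N × Fin K → Fin N × Fin N × Option (Fin K) × Option (Fin K) :=
    fun p => if p.1 then (i, p.2.1, some p.2.2, g p.2.1) else (p.2.1, i, g p.2.1, some p.2.2)
    with hf
  set D : Finset (Bool × Fin N × Fin K) :=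
    Finset.univ ×ˢ ((Finset.univ.erase i).erase 0) ×ˢ (Finset.univ.erase kstar) with hD
  have hset : {m : Fin N × Fin N × Option (Fin K) × Option (Fin K) |
      ∃ j : Fin N, j ≠ i ∧ j ≠ 0 ∧ ∃ k : Fin K, k ≠ kstar ∧
        (m = (i, j, some k, g j) ∨ m = (j, i, g j, some k))} = ↑(D.image f) := by
    ext m
    simp only [Set.mem_setOf_eq, Finset.coe_image, Set.mem_image, Finset.mem_coe, hD,
      Finset.mem_product, Finset.mem_erase, Finset.mem_univ, and_true, true_and]
    constructor
    · rintro ⟨j, hji, hj0, k, hk, hm | hm⟩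
      · exact ⟨(true, j, k), ⟨⟨hj0, hji⟩, hk⟩, hm.symm⟩
      · exact ⟨(false, j, k), ⟨⟨hj0, hji⟩, hk⟩, hm.symm⟩
    · rintro ⟨⟨b, j, k⟩, ⟨⟨hj0, hji⟩, hk⟩, rfl⟩
      cases b
      · exact ⟨j, hji, hj0, k, hk, Or.inr rfl⟩
      · exact ⟨j, hji, hj0, k, hk, Or.inl rfl⟩
  rw [hset, Set.ncard_coe_finset]
  have hinj : Set.InjOn f ↑D := by
    rintro ⟨b, j, k⟩ hp ⟨b', j', k'⟩ hq h
    simp only [hD, Finset.coe_product, Set.mem_prod, Finset.coe_erase, Set.mem_diff,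
      Finset.coe_univ, Set.mem_univ, true_and, Set.mem_singleton_iff] at hp hq
    obtain ⟨⟨hji, hj0⟩, hk⟩ := hp
    obtain ⟨⟨hji', hj0'⟩, hk'⟩ := hq
    cases b <;> cases b' <;> simp only [hf, if_true, if_false, Bool.false_eq_true,
      Prod.mk.injEq] at h
    · obtain ⟨h1, h2, h3, h4⟩ := h
      simp_all
    · exact absurd h.1 hji
      -- j = i
    · exact absurd h.1.symm hji'
    · obtain ⟨h1, h2, h3, h4⟩ := h
      simp_all
  rw [Finset.card_image_of_injOn hinj]
  simp only [hD, Finset.card_product, Finset.card_univ, Fintype.card_bool]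
  rw [Finset.card_erase_of_mem (Finset.mem_erase.mpr ⟨Ne.symm hi, Finset.mem_univ _⟩),
    Finset.card_erase_of_mem (Finset.mem_univ _),
    Finset.card_erase_of_mem (Finset.mem_univ _)]
  rw [Finset.card_univ, Finset.card_univ, Fintype.card_fin, Fintype.card_fin]
  have h2 : N - 1 - 1 = N - 2 := by omega
  rw [h2]; ring
end

section
/- If two dehomogenization formulas for the scale s from a projection equation hold simultaneously (one from the x-coordinate and one from the y-coordinate), they are consistent: d(m_1^T p - q_x m_3^T p)/(z q_x - x) = d(m_2^T p - q_y m_3^T p)/(z q_y - y), provided q lies on the epipolar line of p. -/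
open Matrix

/-- the two dehomogenization formulas for the scale `s` (from
the x- and y-coordinates of the projection equation) are consistent. -/
theorem stmt_14 (m1 m2 m3 p : Fin 3 → ℝ) (x y z d s lam qx qy : ℝ)
    (hlam : 0 < lam)
    (hx : lam * qx = d * (m1 ⬝ᵥ p) + s * x)
    (hy : lam * qy = d * (m2 ⬝ᵥ p) + s * y)
    (hz : lam = d * (m3 ⬝ᵥ p) + s * z)
    (hdx : z * qx - x ≠ 0) (hdy : z * qy - y ≠ 0) :
    d * ((m1 ⬝ᵥ p) - qx * (m3 ⬝ᵥ p)) / (z * qx - x) =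
      d * ((m2 ⬝ᵥ p) - qy * (m3 ⬝ᵥ p)) / (z * qy - y) := by
  have h1 : d * ((m1 ⬝ᵥ p) - qx * (m3 ⬝ᵥ p)) = s * (z * qx - x) := by
    linear_combination qx * hz - hx
  have h2 : d * ((m2 ⬝ᵥ p) - qy * (m3 ⬝ᵥ p)) = s * (z * qy - y) := by
    linear_combination qy * hz - hy
  rw [h1, h2, mul_div_assoc, mul_div_assoc, div_self hdx, div_self hdy]
end
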